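/- arXiv:1801.10418 — 2 statements merged into one kernel-verified Lean document; each statement's English description precedes it below -/
import Mathlib

section
/- For every n ≥ 1, the caterpillar tree is the unique rooted binary tree with n leaves attaining the maximal Sackin index n(n+1)/2 − 1. -/
/-- Rooted binary trees: a single node (leaf) or a root with two subtrees. -/
inductive BTree : Type
  | leaf : BTree
  | node : BTree → BTree → BTree

namespace BTree

/-- Number of leaves of a rooted binary tree. -/
def leaves : BTree → ℕ
  | leaf => 1
  | node l r => l.leaves + r.leaves

/-- Sum of depths of all leaves, where the root of the tree is at depth `d`. -/
def sackinAux : BTree → ℕ → ℕ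
  | leaf, d => d
  | node l r, d => sackinAux l (d + 1) + sackinAux r (d + 1)

/-- Sackin index: the sum of the depths of all leaves. -/
def sackin (t : BTree) : ℕ := sackinAux t 0

/-- Sum, over all internal nodes `u`, of the number of leaves below `u`. -/
def internalLeafSum : BTree → ℕ
  | leaf => 0
  | node l r => (l.leaves + r.leaves) + internalLeafSum l + internalLeafSum r

/-- Sum, over all nodes `v`, of the number of leaves below `v`. -/
def allNodesLeafSum : BTree → ℕ
  | leaf => 1
  | node l r => (l.leaves + r.leaves) + allNodesLeafSum l + allNodesLeafSum r

/-- Sum, over all non-root nodes `v`, of the number of leaves below `v`. -/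
def nonRootLeafSum : BTree → ℕ
  | leaf => 0
  | node l r => allNodesLeafSum l + allNodesLeafSum r

/-- Height: maximal number of edges on a root-to-leaf path. -/
def height : BTree → ℕ
  | leaf => 0
  | node l r => max l.height r.height + 1

/-- Subtree at a given path from the root (`false` = left child, `true` = right child). -/
def subtreeAt : BTree → List Bool → Option BTree
  | t, [] => some t
  | leaf, _ :: _ => none
  | node l _, false :: p => subtreeAt l p
  | node _ r, true :: p => subtreeAt r p

/-- Number of cherries (pairs of sibling leaves) whose two leaves are at depth `d`. -/
def cherriesAt : BTree → ℕ → ℕ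
  | leaf, _ => 0
  | node leaf leaf, d => if d = 1 then 1 else 0
  | node _ _, 0 => 0
  | node l r, d + 1 => cherriesAt l d + cherriesAt r d

/-- `DeleteCherry t d t'` : `t'` is obtained from `t` by deleting a cherry `[u,v]`
(both leaves at depth `d`) together with the two pendant edges, turning the
parent `w` into a leaf. -/
inductive DeleteCherry : BTree → ℕ → BTree → Prop
  | base : DeleteCherry (BTree.node BTree.leaf BTree.leaf) 1 BTree.leaf
  | left {l l' r : BTree} {d : ℕ} :
      DeleteCherry l d l' → DeleteCherry (BTree.node l r) (d + 1) (BTree.node l' r)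
  | right {l r r' : BTree} {d : ℕ} :
      DeleteCherry r d r' → DeleteCherry (BTree.node l r) (d + 1) (BTree.node l r')

/-- Caterpillar tree with `n` leaves (for `n ≥ 1`): the unique rooted binary tree
with exactly one cherry. -/
def caterpillar : ℕ → BTree
  | 0 => BTree.leaf
  | 1 => BTree.leaf
  | n + 2 => BTree.node (caterpillar (n + 1)) BTree.leaf

/-- Fully balanced tree of height `k`, with `2^k` leaves all at depth `k`. -/
def balanced : ℕ → BTree
  | 0 => BTree.leaf
  | k + 1 => BTree.node (balanced k) (balanced k)

/-- Isomorphism of rooted binary trees (children are unordered). -/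
inductive Iso : BTree → BTree → Prop
  | leaf : Iso BTree.leaf BTree.leaf
  | node {a b c d : BTree} : Iso a c → Iso b d → Iso (BTree.node a b) (BTree.node c d)
  | swap {a b c d : BTree} : Iso a d → Iso b c → Iso (BTree.node a b) (BTree.node c d)

end BTree

open BTree

lemma leaves_pos (t : BTree) : 1 ≤ t.leaves := by
  induction t with
  | leaf => simp [leaves]
  | node l r ihl ihr => simp [leaves]; omega

lemma sackinAux_eq (t : BTree) (d : ℕ) : sackinAux t d = t.sackin + d * t.leaves := by
  induction t generalizing d with
  | leaf => simp [sackinAux, sackin, leaves]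
  | node l r ihl ihr =>
    have h0 : (node l r).sackin = sackinAux l 1 + sackinAux r 1 := rfl
    show sackinAux l (d + 1) + sackinAux r (d + 1) = _
    rw [h0, ihl (d + 1), ihr (d + 1), ihl 1, ihr 1]
    simp only [leaves]
    ring

lemma sackin_node (l r : BTree) :
    (node l r).sackin = l.sackin + r.sackin + l.leaves + r.leaves := by
  have h0 : (node l r).sackin = sackinAux l 1 + sackinAux r 1 := rfl
  rw [h0, sackinAux_eq l 1, sackinAux_eq r 1]
  ring

lemma leaves_eq_one {t : BTree} (h : t.leaves = 1) : t = leaf := by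
  cases t with
  | leaf => rfl
  | node l r =>
    have := leaves_pos l; have := leaves_pos r
    simp [leaves] at h; omega

lemma sackin_bound (t : BTree) : 2 * t.sackin + 2 ≤ t.leaves * (t.leaves + 1) := by
  induction t with
  | leaf => simp [sackin, sackinAux, leaves]
  | node l r ihl ihr =>
    have ha := leaves_pos l; have hb := leaves_pos r
    rw [sackin_node]
    simp only [leaves]
    nlinarith

lemma caterpillar_leaves (n : ℕ) (hn : 1 ≤ n) : (caterpillar n).leaves = n := by
  induction n with
  | zero => omega
  | succ m ih =>
    cases m with
    | zero => simp [caterpillar, leaves]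
    | succ k =>
      have := ih (by omega)
      simp [caterpillar, leaves, this]

lemma caterpillar_sackin (n : ℕ) (hn : 1 ≤ n) :
    2 * (caterpillar n).sackin + 2 = n * (n + 1) := by
  induction n with
  | zero => omega
  | succ m ih =>
    cases m with
    | zero => simp [caterpillar, sackin, sackinAux]
    | succ k =>
      have h1 := ih (by omega)
      have h2 := caterpillar_leaves (k + 1) (by omega)
      show 2 * (node (caterpillar (k + 1)) leaf).sackin + 2 = _
      rw [sackin_node, h2]
      simp only [sackin, sackinAux, leaves] at *
      nlinarith

lemma uniq (t : BTree) (heq : 2 * t.sackin + 2 = t.leaves * (t.leaves + 1)) :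
    Iso t (caterpillar t.leaves) := by
  induction t with
  | leaf => exact Iso.leaf
  | node l r ihl ihr =>
    have ha := leaves_pos l; have hb := leaves_pos r
    obtain ⟨a, hla⟩ : ∃ a, l.leaves = a + 1 := ⟨l.leaves - 1, by omega⟩
    obtain ⟨b, hrb⟩ : ∃ b, r.leaves = b + 1 := ⟨r.leaves - 1, by omega⟩
    have hl := sackin_bound l
    have hr := sackin_bound r
    rw [sackin_node] at heq
    simp only [leaves] at heq ⊢
    rw [hla, hrb] at heq ⊢
    rw [hla] at hl
    rw [hrb] at hr
    have hab : a * b = 0 := by nlinarith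
    have hleq : 2 * l.sackin + 2 = (a + 1) * (a + 1 + 1) := by nlinarith
    have hreq : 2 * r.sackin + 2 = (b + 1) * (b + 1 + 1) := by nlinarith
    rcases Nat.mul_eq_zero.mp hab with h0 | h0
    · subst h0
      have hlf : l = leaf := leaves_eq_one (by omega)
      subst hlf
      have he : (0 + 1 + (b + 1)) = b + 2 := by omega
      rw [he]
      show Iso _ (node (caterpillar (b + 1)) leaf)
      have hiso := ihr (by rw [hrb]; exact hreq)
      rw [hrb] at hiso
      exact Iso.swap Iso.leaf hiso
    · subst h0
      have hrf : r = leaf := leaves_eq_one (by omega)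
      subst hrf
      have he : (a + 1 + (0 + 1)) = a + 2 := by omega
      rw [he]
      show Iso _ (node (caterpillar (a + 1)) leaf)
      have hiso := ihl (by rw [hla]; exact hleq)
      rw [hla] at hiso
      exact Iso.node hiso Iso.leaf

/-- for every `n ≥ 1`, the caterpillar is the unique (up to
isomorphism) rooted binary tree with `n` leaves attaining the maximal Sackin
index `n(n+1)/2 − 1`. -/
theorem stmt6 (n : ℕ) (hn : 1 ≤ n) :
    (caterpillar n).leaves = n ∧
    (caterpillar n).sackin = n * (n + 1) / 2 - 1 ∧
    ∀ t : BTree, t.leaves = n → t.sackin = n * (n + 1) / 2 - 1 →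
      Iso t (caterpillar n) := by
  have hcl := caterpillar_leaves n hn
  have hcs := caterpillar_sackin n hn
  refine ⟨hcl, by omega, ?_⟩
  intro t ht hs
  have hb := sackin_bound t
  rw [ht] at hb
  have heq : 2 * t.sackin + 2 = t.leaves * (t.leaves + 1) := by rw [ht]; omega
  have := uniq t heq
  rwa [ht] at this
end

section
/- Let T be a rooted binary tree with n ≥ 2 leaves having minimal Sackin index among trees with n leaves, and let k = ⌈log₂ n⌉. Then the height of T equals k, and T has exactly n − 2^{k−1} cherries of depth k. -/
/-!
In a Sackin-minimal tree of height `h` every leaf has depth `h` or `h - 1`: otherwise deleting a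
deepest cherry (which lowers the index by `h + 1`) and growing a cherry on a shallowest leaf, of
depth `m ≤ h - 2` (which raises it by `m + 2`), keeps the number of leaves and lowers the index.
In such a tree the leaves at depth `h` pair up into cherries, and collapsing them gives the
balanced tree of height `h - 1`; hence `cherriesAt t h + 2 ^ (h - 1) = n`. Since some cherry has
depth `h`, this gives `2 ^ (h - 1) < n ≤ 2 ^ h`, i.e. `h = ⌈log₂ n⌉`.
-/
namespace BTree

def minDepth : BTree → ℕ
  | leaf => 0
  | node l r => min l.minDepth r.minDepth + 1

lemma eq_leaf_of_height_eq_zero {t : BTree} (h : t.height = 0) : t = leaf := by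
  cases t with
  | leaf => rfl
  | node l r => simp [height] at h

lemma sackinAux_eq_sackin_add (t : BTree) (d : ℕ) : t.sackinAux d = t.sackin + d * t.leaves := by
  induction t generalizing d with
  | leaf => simp [sackin, sackinAux, leaves]
  | node l r ihl ihr =>
    simp only [sackin, sackinAux, leaves] at *
    rw [ihl, ihr, ihl 1, ihr 1]
    ring

lemma sackin_node (l r : BTree) : (node l r).sackin = l.sackin + r.sackin + (l.leaves + r.leaves) := by
  rw [sackin, sackinAux, sackinAux_eq_sackin_add l, sackinAux_eq_sackin_add r]
  ring

lemma leaves_le_two_pow_height (t : BTree) : t.leaves ≤ 2 ^ t.height := by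
  induction t with
  | leaf => simp [leaves, height]
  | node l r ihl ihr =>
    simp only [leaves, height, pow_succ, mul_two]
    have hl := Nat.pow_le_pow_right two_pos (le_max_left l.height r.height)
    have hr := Nat.pow_le_pow_right two_pos (le_max_right l.height r.height)
    omega

@[simp]
lemma cherriesAt_zero (t : BTree) : cherriesAt t 0 = 0 := by
  rcases t with _ | ⟨_ | _, _ | _⟩ <;> rfl

lemma cherriesAt_node_add_two (l r : BTree) (d : ℕ) :
    cherriesAt (node l r) (d + 2) = cherriesAt l (d + 1) + cherriesAt r (d + 1) := by
  rcases l with _ | _ <;> rcases r with _ | _ <;> simp [cherriesAt]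

lemma cherriesAt_add_two_pow {t : BTree} {d : ℕ} (hd : d ≤ t.minDepth) (hh : t.height ≤ d + 1) :
    cherriesAt t (d + 1) + 2 ^ d = t.leaves := by
  induction t generalizing d with
  | leaf =>
    obtain rfl : d = 0 := by simpa [minDepth] using hd
    rfl
  | node l r ihl ihr =>
    simp only [minDepth, height] at hd hh
    rcases d with _ | e
    · obtain rfl := eq_leaf_of_height_eq_zero (t := l) (by omega)
      obtain rfl := eq_leaf_of_height_eq_zero (t := r) (by omega)
      rfl
    · rw [cherriesAt_node_add_two, leaves, ← ihl (d := e) (by omega) (by omega),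
        ← ihr (d := e) (by omega) (by omega)]
      ring

namespace DeleteCherry

variable {t t' : BTree} {d : ℕ}

lemma leaves_add_one (h : DeleteCherry t d t') : t'.leaves + 1 = t.leaves := by
  induction h <;> simp only [leaves] at * <;> omega

lemma sackin_add (h : DeleteCherry t d t') : t'.sackin + d + 1 = t.sackin := by
  induction h with
  | base => rfl
  | left h ih =>
    have := h.leaves_add_one
    rw [sackin_node, sackin_node]
    omega
  | right h ih =>
    have := h.leaves_add_one
    rw [sackin_node, sackin_node]
    omega

lemma minDepth_le (h : DeleteCherry t d t') : t'.minDepth ≤ t.minDepth := by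
  induction h <;> simp only [minDepth] at * <;> omega

lemma cherriesAt_pos (h : DeleteCherry t d t') : 0 < cherriesAt t d := by
  induction h with
  | base => simp [cherriesAt]
  | @left l l' r d _ ih =>
    obtain ⟨e, rfl⟩ : ∃ e, d = e + 1 := Nat.exists_eq_succ_of_ne_zero (by rintro rfl; simp at ih)
    rw [cherriesAt_node_add_two]
    omega
  | @right l r r' d _ ih =>
    obtain ⟨e, rfl⟩ : ∃ e, d = e + 1 := Nat.exists_eq_succ_of_ne_zero (by rintro rfl; simp at ih)
    rw [cherriesAt_node_add_two]
    omega

end DeleteCherry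

lemma exists_deleteCherry_height {t : BTree} (ht : t ≠ leaf) : ∃ t', DeleteCherry t t.height t' := by
  induction t with
  | leaf => exact absurd rfl ht
  | node l r ihl ihr =>
    by_cases hl : l = leaf <;> by_cases hr : r = leaf
    · subst hl hr
      exact ⟨leaf, .base⟩
    · obtain ⟨r', h⟩ := ihr hr
      subst hl
      exact ⟨node leaf r', by simpa [height] using h.right⟩
    · obtain ⟨l', h⟩ := ihl hl
      subst hr
      exact ⟨node l' leaf, by simpa [height] using h.left⟩
    · rcases le_total r.height l.height with hlr | hlr
      · obtain ⟨l', h⟩ := ihl hl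
        exact ⟨node l' r, by simpa [height, hlr] using h.left⟩
      · obtain ⟨r', h⟩ := ihr hr
        exact ⟨node l r', by simpa [height, hlr] using h.right⟩

lemma exists_deleteCherry_minDepth (t : BTree) : ∃ t', DeleteCherry t' (t.minDepth + 1) t := by
  induction t with
  | leaf => exact ⟨node leaf leaf, .base⟩
  | node l r ihl ihr =>
    rcases le_total l.minDepth r.minDepth with hlr | hlr
    · obtain ⟨l', h⟩ := ihl
      exact ⟨node l' r, by simpa [minDepth, hlr] using h.left⟩
    · obtain ⟨r', h⟩ := ihr
      exact ⟨node l r', by simpa [minDepth, hlr] using h.right⟩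

lemma height_le_minDepth_add_one_of_sackin_minimal {t : BTree}
    (hmin : ∀ t' : BTree, t'.leaves = t.leaves → t.sackin ≤ t'.sackin) :
    t.height ≤ t.minDepth + 1 := by
  by_contra! hgap
  have ht : t ≠ leaf := by rintro rfl; simp [height] at hgap
  obtain ⟨pruned, hprune⟩ := exists_deleteCherry_height ht
  obtain ⟨grown, hgrow⟩ := exists_deleteCherry_minDepth pruned
  have := hmin grown (by rw [← hprune.leaves_add_one, hgrow.leaves_add_one])
  have := hprune.sackin_add
  have := hgrow.sackin_add
  have := hprune.minDepth_le
  omega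

end BTree

open BTree

theorem stmt14_general (t : BTree)
    (hmin : ∀ t' : BTree, t'.leaves = t.leaves → t.sackin ≤ t'.sackin) :
    t.height = Nat.clog 2 t.leaves ∧
    cherriesAt t (Nat.clog 2 t.leaves) = t.leaves - 2 ^ (Nat.clog 2 t.leaves - 1) := by
  rcases eq_or_ne t leaf with rfl | ht
  · simp [height, leaves, cherriesAt]
  have hbalanced := height_le_minDepth_add_one_of_sackin_minimal hmin
  obtain ⟨pruned, hprune⟩ := exists_deleteCherry_height ht
  have hpos := hprune.cherriesAt_pos
  have hheight : 0 < t.height := Nat.pos_of_ne_zero (by intro h; simp [h] at hpos)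
  have hcount : cherriesAt t t.height + 2 ^ (t.height - 1) = t.leaves := by
    have := cherriesAt_add_two_pow (d := t.height - 1) (t := t) (by omega) (by omega)
    rwa [Nat.sub_add_cancel hheight] at this
  have hclog : Nat.clog 2 t.leaves = t.height := by
    refine le_antisymm ((Nat.clog_le_iff_le_pow one_lt_two).2 (leaves_le_two_pow_height t)) ?_
    have : t.height - 1 < Nat.clog 2 t.leaves := (Nat.lt_clog_iff_pow_lt one_lt_two).2 (by omega)
    omega
  rw [hclog]
  omega

/-- a minimal-Sackin tree with `n ≥ 2` leaves has height
`k = ⌈log₂ n⌉` and exactly `n − 2^{k−1}` cherries of depth `k`. -/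
theorem stmt14 (t : BTree) (h2 : 2 ≤ t.leaves)
    (hmin : ∀ t' : BTree, t'.leaves = t.leaves → t.sackin ≤ t'.sackin) :
    t.height = Nat.clog 2 t.leaves ∧
    cherriesAt t (Nat.clog 2 t.leaves) = t.leaves - 2 ^ (Nat.clog 2 t.leaves - 1) :=
  stmt14_general t hmin
end
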